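/- Let p be a prime and let G be a group. If the quotient G/Z(G) of G by its center is a finite p-group, then the commutator subgroup [G, G] is a finite p-group. -/

import Mathlib

/-!
Commutators only depend on their arguments modulo the centre, so a finite `G ⧸ Z(G)` leaves only
finitely many commutators. Schur's theorem in the form
`Nat.card [G, G] ∣ [G : Z(G)] ^ N` then bounds `[G, G]` by a power of `|G ⧸ Z(G)|`, which divides a
power of `p`.
-/

open scoped commutatorElement

namespace Subgroup

variable {G : Type*} [Group G]

theorem commutatorElement_mul_mem_center {g h z w : G} (hz : z ∈ center G) (hw : w ∈ center G) :
    ⁅g * z, h * w⁆ = ⁅g, h⁆ := by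
  have cz : ∀ a : G, Commute z a := fun a => (mem_center_iff.mp hz a).symm
  have cw : ∀ a : G, Commute w a := fun a => (mem_center_iff.mp hw a).symm
  simp only [commutatorElement_def, mul_inv_rev, mul_assoc]
  rw [(cz h).left_comm, (cz w).left_comm, ← mul_assoc z, mul_inv_cancel, one_mul,
    (cw g⁻¹).left_comm, ← mul_assoc w, mul_inv_cancel, one_mul]

theorem commutatorSet_subset_range_out :
    commutatorSet G ⊆
      Set.range fun q : (G ⧸ center G) × (G ⧸ center G) => ⁅q.1.out, q.2.out⁆ := by
  rintro _ ⟨g, h, rfl⟩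
  obtain ⟨z, hz⟩ := QuotientGroup.mk_out_eq_mul (center G) g
  obtain ⟨w, hw⟩ := QuotientGroup.mk_out_eq_mul (center G) h
  exact ⟨(g, h), by simp only [hz, hw, commutatorElement_mul_mem_center z.2 w.2]⟩

theorem finite_commutatorSet_of_finite_quotient_center [Finite (G ⧸ center G)] :
    (commutatorSet G).Finite :=
  (Set.finite_range _).subset commutatorSet_subset_range_out

end Subgroup

theorem commutator_finite_pGroup_of_pGroup_quotient_center
    {p : ℕ} {G : Type*} [Group G]
    (hfin : Finite (G ⧸ Subgroup.center G)) (hpgrp : IsPGroup p (G ⧸ Subgroup.center G)) :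
    Finite ↥(commutator G) ∧ IsPGroup p ↥(commutator G) := by
  have : Finite (commutatorSet G) := Subgroup.finite_commutatorSet_of_finite_quotient_center
  obtain ⟨n, hn⟩ := isPGroup_iff_card_dvd_pow.mp hpgrp
  set N := (Subgroup.center G).index * Nat.card (commutatorSet G) + 1
  refine ⟨inferInstance, IsPGroup.of_card_dvd_pow (n := n * N) ?_⟩
  calc Nat.card (commutator G)
      ∣ (Subgroup.center G).index ^ N := Subgroup.card_commutator_dvd_index_center_pow G
    _ ∣ (p ^ n) ^ N := pow_dvd_pow_of_dvd hn N
    _ = p ^ (n * N) := (pow_mul p n N).symm
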